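/- arXiv:2508.04447 — 3 statements merged into one kernel-verified Lean document; each statement's English description precedes it below -/
import Mathlib

section
/- Let Ex, En ∈ ℝ and He ≥ 0. Let μ be the cloud model CM(Ex, En, He), i.e., the distribution of X generated by the two-layer process S ~ N(En, He²) and X | S = s ~ N(Ex, s²). Then for every z ∈ ℝ, the characteristic function of μ satisfies Φ_μ(z) = exp(i·z·Ex − En²·z² / (2·(1 + z²·He²))) / √(1 + z²·He²). -/
open MeasureTheory ProbabilityTheory Real

/-- The characteristic function of a measure on `ℝ`, `Φ_μ(z) = ∫ exp(i z x) dμ(x)`. -/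
noncomputable def charFunReal (μ : Measure ℝ) (z : ℝ) : ℂ :=
  ∫ x, Complex.exp (Complex.I * z * x) ∂μ

/-- The cloud model `CM(Ex, En, He)`: the mixture obtained by drawing `S ~ N(En, He²)`
and then `X | S = s ~ N(Ex, s²)`. -/
noncomputable def cloudModel (Ex En He : ℝ) : Measure ℝ :=
  (gaussianReal En ⟨He ^ 2, sq_nonneg He⟩).bind
    fun s => gaussianReal Ex ⟨s ^ 2, sq_nonneg s⟩

/-!
Conditionally on `S = s`, the characteristic function of `N(Ex, s²)` at `z` is
`exp(i z Ex - z² s² / 2)`, so `Φ_μ(z) = exp(i z Ex) · E[exp(-z² S² / 2)]` with `S ~ N(En, He²)`.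
The remaining expectation is the integral of the exponential of a quadratic polynomial against a
Gaussian density, evaluated by completing the square.
-/

open scoped NNReal

lemma charFunReal_eq_charFun (μ : Measure ℝ) (z : ℝ) : charFunReal μ z = charFun μ z := by
  rw [charFunReal, charFun_apply_real]
  congr 1 with x
  ring_nf

lemma charFun_comp {α E : Type*} [MeasurableSpace α] [NormedAddCommGroup E]
    [InnerProductSpace ℝ E] [MeasurableSpace E] [OpensMeasurableSpace E]
    (μ : Measure α) [IsFiniteMeasure μ] (κ : Kernel α E) [IsFiniteKernel κ] (t : E) :
    charFun (κ ∘ₘ μ) t = ∫ a, charFun (κ a) t ∂μ := by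
  simp_rw [charFun_apply, Measure.comp_eq_comp_const_apply]
  exact Kernel.integral_comp ((integrable_const (1 : ℝ)).mono (by fun_prop) (by simp))

noncomputable def gaussianRealSqKernel (m : ℝ) : Kernel ℝ ℝ where
  toFun s := gaussianReal m ⟨s ^ 2, sq_nonneg s⟩
  measurable' := by
    have : Measurable fun s : ℝ => (⟨s ^ 2, sq_nonneg s⟩ : ℝ≥0) :=
      (measurable_id.pow_const 2).subtype_mk
    exact measurable_gaussianReal.comp (measurable_const.prodMk this)

instance (m : ℝ) : IsMarkovKernel (gaussianRealSqKernel m) :=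
  ⟨fun _ => instIsProbabilityMeasureGaussianReal m _⟩

lemma integral_cexp_neg_mul_sq_div_two_gaussianReal (m : ℝ) (v : ℝ≥0) {a : ℝ}
    (h : 0 < 1 + a * v) :
    ∫ x, Complex.exp (-(a * x ^ 2 / 2)) ∂gaussianReal m v
      = Complex.exp (-(a * m ^ 2 / (2 * (1 + a * v)))) / √(1 + a * v) := by
  rcases eq_or_ne v 0 with rfl | hv
  · simp
  have hv0 : (0 : ℝ) < v := NNReal.coe_pos.mpr (pos_iff_ne_zero.mpr hv)
  have hvC : (v : ℂ) ≠ 0 := by exact_mod_cast hv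
  have hD : (1 + v * a : ℂ) ≠ 0 := by rw [mul_comm]; exact_mod_cast h.ne'
  have hb : 0 < (1 + a * v) / (2 * v) := by positivity
  set b : ℝ := (1 + a * v) / (2 * v) with hb_def
  calc ∫ x, Complex.exp (-(a * x ^ 2 / 2)) ∂gaussianReal m v
    _ = ∫ x : ℝ, gaussianPDFReal m v x * Complex.exp (-(a * x ^ 2 / 2)) := by
      simp_rw [integral_gaussianReal_eq_integral_smul hv, Complex.real_smul]
    _ = (√(2 * π * v))⁻¹ * ∫ x : ℝ,
          Complex.exp (-b * x ^ 2 + m / v * x + -m ^ 2 / (2 * v)) := by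
      unfold gaussianPDFReal
      push_cast
      simp_rw [mul_assoc, integral_const_mul, ← Complex.exp_add]
      congr with x
      congr 1
      rw [hb_def]
      push_cast
      field_simp
      ring
    _ = (√(2 * π * v))⁻¹ * (π / b) ^ (1 / 2 : ℂ)
          * Complex.exp (-m ^ 2 / (2 * v) - (m / v) ^ 2 / (4 * -b)) := by
      rw [integral_cexp_quadratic (by simpa using hb), neg_neg, ← mul_assoc]
    _ = _ := by
      have hpi : π / b = 2 * π * v / (1 + a * v) := by
        rw [hb_def]; field_simp
      have hsqrt : (π / b : ℂ) ^ (1 / 2 : ℂ) = ((√(2 * π * v) / √(1 + a * v) : ℝ) : ℂ) := by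
        rw [← Real.sqrt_div' _ h.le, ← hpi, Real.sqrt_eq_rpow, Complex.ofReal_cpow (by positivity)]
        push_cast
        rfl
      have hsqrt0 : √(2 * π * v) ≠ 0 := by positivity
      rw [hsqrt, Complex.ofReal_inv, Complex.ofReal_div, ← mul_div_assoc,
        inv_mul_cancel₀ (by exact_mod_cast hsqrt0), div_mul_eq_mul_div, one_mul]
      congr 2
      rw [hb_def]
      push_cast
      field_simp
      ring

lemma charFun_gaussianRealSqKernel (m z s : ℝ) :
    charFun (gaussianRealSqKernel m s) z
      = Complex.exp (z * m * Complex.I) * Complex.exp (-((z ^ 2 : ℝ) * s ^ 2 / 2)) := by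
  have h : charFun (gaussianRealSqKernel m s) z
      = Complex.exp (z * m * Complex.I - (s ^ 2 : ℝ) * z ^ 2 / 2) :=
    charFun_gaussianReal z
  rw [h, ← Complex.exp_add]
  push_cast
  ring_nf

lemma charFun_gaussianRealSqKernel_comp_gaussianReal (m μ : ℝ) (v : ℝ≥0) (z : ℝ) :
    charFun (gaussianRealSqKernel m ∘ₘ gaussianReal μ v) z =
      Complex.exp (Complex.I * z * m - (μ ^ 2 * z ^ 2 : ℝ) / (2 * (1 + z ^ 2 * v) : ℝ)) /
        (√(1 + z ^ 2 * v) : ℂ) := by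
  simp_rw [charFun_comp, charFun_gaussianRealSqKernel, integral_const_mul]
  rw [integral_cexp_neg_mul_sq_div_two_gaussianReal μ v (by positivity), ← mul_div_assoc,
    ← Complex.exp_add]
  push_cast
  ring_nf

theorem cloudModel_charFun_general (Ex En He : ℝ) (z : ℝ) :
    charFunReal (cloudModel Ex En He) z =
      Complex.exp (Complex.I * z * Ex -
          (En ^ 2 * z ^ 2 : ℝ) / (2 * (1 + z ^ 2 * He ^ 2) : ℝ)) /
        (Real.sqrt (1 + z ^ 2 * He ^ 2) : ℂ) := by
  rw [charFunReal_eq_charFun]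
  exact charFun_gaussianRealSqKernel_comp_gaussianReal Ex En ⟨He ^ 2, sq_nonneg He⟩ z

theorem cloudModel_charFun (Ex En He : ℝ) (hHe : 0 ≤ He) (z : ℝ) :
    charFunReal (cloudModel Ex En He) z =
      Complex.exp (Complex.I * z * Ex -
          (En ^ 2 * z ^ 2 : ℝ) / (2 * (1 + z ^ 2 * He ^ 2) : ℝ)) /
        (Real.sqrt (1 + z ^ 2 * He ^ 2) : ℂ) :=
  cloudModel_charFun_general Ex En He z
end

section
/- Let En ∈ ℝ and He ≥ 0, and let μ be the cloud model CM(0, En, He) with expectation Ex = 0. Then its characteristic function is real-valued and strictly positive: for every z ∈ ℝ, Φ_μ(z) = exp(−En²·z² / (2·(1 + z²·He²))) / √(1 + z²·He²) ∈ (0, 1]. -/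
/-!
The cloud model is the scale mixture `S • Z` of a standard Gaussian `Z` by an independent
`S ~ N(En, He²)`, so its characteristic function at `z` is the mean over `S` of the
characteristic function `exp(-z² S² / 2)` of `N(0, S²)`. Completing the square in this Gaussian
integral gives `exp(-En² z² / (2D)) / √D` with `D = 1 + z² He² ≥ 1`, whence the bounds.
-/

open MeasureTheory ProbabilityTheory Real

open scoped NNReal

lemma charFun_bind {α E : Type*} [MeasurableSpace α] [SeminormedAddCommGroup E]
    [InnerProductSpace ℝ E] [MeasurableSpace E] [OpensMeasurableSpace E]
    {ν : Measure α} [IsFiniteMeasure ν]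
    {k : α → Measure E} (hk : Measurable k) [∀ a, IsProbabilityMeasure (k a)] (t : E) :
    charFun (ν.bind k) t = ∫ a, charFun (k a) t ∂ν := by
  let κ : Kernel α E := ⟨k, hk⟩
  have : IsMarkovKernel κ := ⟨inferInstance⟩
  change charFun (κ ∘ₘ ν) t = _
  rw [Measure.comp_eq_comp_const_apply, charFun_apply, Kernel.integral_comp]
  · rfl
  · exact (integrable_const (1 : ℝ)).mono' (by fun_prop)
      (ae_of_all _ fun x ↦ by simp [Complex.norm_exp])

lemma charFun_bind_gaussianReal_zero_sq (ν : Measure ℝ) [IsFiniteMeasure ν] (t : ℝ) :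
    charFun (ν.bind fun s ↦ gaussianReal 0 (s ^ 2).toNNReal) t =
      (∫ s, rexp (-(t ^ 2 / 2) * s ^ 2) ∂ν : ℝ) := by
  rw [charFun_bind (by fun_prop), ← integral_complex_ofReal]
  congr 1 with s
  rw [charFun_gaussianReal, Real.coe_toNNReal _ (sq_nonneg s), Complex.ofReal_exp]
  push_cast
  ring_nf

lemma integral_exp_neg_mul_sq_gaussianReal (m c : ℝ) (v : ℝ≥0) (hcv : 0 < 1 + 2 * c * v) :
    ∫ x, rexp (-c * x ^ 2) ∂gaussianReal m v =
      rexp (-(c * m ^ 2) / (1 + 2 * c * v)) / √(1 + 2 * c * v) := by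
  rcases eq_or_ne v 0 with rfl | hv
  · simp
  set D := 1 + 2 * c * v
  have hv' : (0 : ℝ) < v := by positivity
  have complete_square : ∀ x, gaussianPDFReal m v x • rexp (-c * x ^ 2) =
      (√(2 * π * v))⁻¹ * rexp (-(c * m ^ 2) / D) *
        rexp (-(D / (2 * v)) * (x - m / D) ^ 2) := by
    intro x
    rw [gaussianPDFReal, smul_eq_mul, mul_assoc, mul_assoc, mul_assoc, ← exp_add, ← exp_add]
    congr 2
    field_simp
    ring
  rw [integral_gaussianReal_eq_integral_smul hv]
  simp_rw [complete_square]
  rw [integral_const_mul, integral_sub_right_eq_self (fun x ↦ rexp (-(D / (2 * v)) * x ^ 2)),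
    integral_gaussian, div_div_eq_mul_div, sqrt_div' _ hcv.le]
  field_simp

/-- The anonymous constructors in `cloudModel` elaborate to terms of the subtype
`{r // 0 ≤ r}` rather than of `ℝ≥0`, which blocks instance search and rewriting. -/
lemma cloudModel_eq_bind (Ex En He : ℝ) :
    cloudModel Ex En He =
      (gaussianReal En (He ^ 2).toNNReal).bind fun s ↦ gaussianReal Ex (s ^ 2).toNNReal := by
  rw [cloudModel]
  congr 1
  · exact congrArg _ (Real.toNNReal_of_nonneg (sq_nonneg He)).symm
  · exact funext fun s ↦ congrArg _ (Real.toNNReal_of_nonneg (sq_nonneg s)).symm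

theorem cloudModel_charFun_center_zero_general (En He : ℝ) (z : ℝ) :
    charFunReal (cloudModel 0 En He) z =
        ((Real.exp (-(En ^ 2 * z ^ 2) / (2 * (1 + z ^ 2 * He ^ 2))) /
          Real.sqrt (1 + z ^ 2 * He ^ 2) : ℝ) : ℂ) ∧
      Real.exp (-(En ^ 2 * z ^ 2) / (2 * (1 + z ^ 2 * He ^ 2))) /
          Real.sqrt (1 + z ^ 2 * He ^ 2) ∈ Set.Ioc (0 : ℝ) 1 := by
  have hD : 1 + 2 * (z ^ 2 / 2) * ((He ^ 2).toNNReal : ℝ) = 1 + z ^ 2 * He ^ 2 := by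
    rw [Real.coe_toNNReal _ (sq_nonneg He)]
    ring
  refine ⟨?_, by positivity, ?_⟩
  · rw [charFunReal_eq_charFun, cloudModel_eq_bind, charFun_bind_gaussianReal_zero_sq,
      integral_exp_neg_mul_sq_gaussianReal _ _ _ (hD ▸ by positivity), hD]
    congr 3
    field_simp
  · rw [div_le_one (by positivity)]
    calc rexp (-(En ^ 2 * z ^ 2) / (2 * (1 + z ^ 2 * He ^ 2))) ≤ 1 :=
          exp_le_one_iff.mpr
            (div_nonpos_of_nonpos_of_nonneg (neg_nonpos.mpr (by positivity)) (by positivity))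
      _ ≤ √(1 + z ^ 2 * He ^ 2) := one_le_sqrt.mpr (by nlinarith [sq_nonneg (z * He)])

/-- For `Ex = 0`, the characteristic function of the cloud model is real-valued and
takes values in `(0, 1]`. -/
theorem cloudModel_charFun_center_zero (En He : ℝ) (hHe : 0 ≤ He) (z : ℝ) :
    charFunReal (cloudModel 0 En He) z =
        ((Real.exp (-(En ^ 2 * z ^ 2) / (2 * (1 + z ^ 2 * He ^ 2))) /
          Real.sqrt (1 + z ^ 2 * He ^ 2) : ℝ) : ℂ) ∧
      Real.exp (-(En ^ 2 * z ^ 2) / (2 * (1 + z ^ 2 * He ^ 2))) /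
          Real.sqrt (1 + z ^ 2 * He ^ 2) ∈ Set.Ioc (0 : ℝ) 1 :=
  cloudModel_charFun_center_zero_general En He z
end

section
/- Let Ex, En ∈ ℝ and He > 0, and let μ be the cloud model CM(Ex, En, He). Then μ is absolutely continuous with respect to Lebesgue measure on ℝ, with density f(x) = ∫_{ℝ} (1/√(2π·s²))·exp(−(x − Ex)²/(2·s²)) · (1/√(2π·He²))·exp(−(s − En)²/(2·He²)) ds for (Lebesgue-almost every) x ∈ ℝ, where the inner Gaussian density at s = 0 is interpreted as 0 (the set {s = 0} being ν-null). -/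
/-! For `He > 0` the mixing law `N(En, He²)` does not charge `{0}`, so almost every component
`N(Ex, s²)` is `volume.withDensity` of its Gaussian density. Tonelli then exchanges mixing and
integration, exhibiting the cloud model as `volume.withDensity` of the mixed density. That density
is therefore the Radon–Nikodym derivative; it is finite almost everywhere because the cloud model
is a probability measure, so its lower Lebesgue integral is the Bochner integral of the statement,
which `integral_gaussianReal_eq_integral_smul` turns into an integral against `ds`. -/

open MeasureTheory ProbabilityTheory Real
open scoped NNReal ENNReal

namespace MeasureTheory.Measure

variable {α β : Type*} [MeasurableSpace α] [MeasurableSpace β]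

theorem bind_withDensity (ν : Measure α) (μ : Measure β) [SFinite ν] [SFinite μ]
    {f : α → β → ℝ≥0∞} (hf : Measurable (Function.uncurry f)) :
    ν.bind (fun a => μ.withDensity (f a)) = μ.withDensity (fun b => ∫⁻ a, f a b ∂ν) := by
  have hκ : Measurable fun a => μ.withDensity (f a) := by
    convert (Kernel.withDensity (Kernel.const α μ) f).measurable using 1
    ext1 a
    rw [Kernel.withDensity_apply _ hf, Kernel.const_apply]
  ext A hA
  rw [bind_apply hA hκ.aemeasurable, withDensity_apply _ hA]
  simp_rw [withDensity_apply _ hA]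
  exact lintegral_lintegral_swap hf.aemeasurable

end MeasureTheory.Measure

lemma ofReal_integral_eq_lintegral_ofReal_of_lt_top {α : Type*} [MeasurableSpace α]
    {μ : Measure α} {g : α → ℝ} (hg : AEStronglyMeasurable g μ) (h0 : 0 ≤ᵐ[μ] g)
    (hfin : ∫⁻ a, ENNReal.ofReal (g a) ∂μ < ∞) :
    ENNReal.ofReal (∫ a, g a ∂μ) = ∫⁻ a, ENNReal.ofReal (g a) ∂μ :=
  ofReal_integral_eq_lintegral_ofReal ⟨hg, (hasFiniteIntegral_iff_ofReal h0).2 hfin⟩ h0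

lemma measurable_gaussianReal_sq (m : ℝ) :
    Measurable fun s : ℝ => gaussianReal m ⟨s ^ 2, sq_nonneg s⟩ :=
  measurable_gaussianReal.comp (measurable_const.prodMk (by fun_prop))

lemma measurable_gaussianPDF_sq (m : ℝ) :
    Measurable (Function.uncurry fun (s x : ℝ) => gaussianPDF m ⟨s ^ 2, sq_nonneg s⟩ x) := by
  unfold gaussianPDF gaussianPDFReal
  fun_prop

lemma measurable_lintegral_gaussianPDF_sq (m : ℝ) (ν : Measure ℝ) [SFinite ν] :
    Measurable fun x => ∫⁻ s, gaussianPDF m ⟨s ^ 2, sq_nonneg s⟩ x ∂ν :=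
  (measurable_gaussianPDF_sq m).lintegral_prod_left'

lemma bind_gaussianReal_sq_eq_withDensity (m : ℝ) (ν : Measure ℝ) [SFinite ν] (hν : ν {0} = 0) :
    ν.bind (fun s => gaussianReal m ⟨s ^ 2, sq_nonneg s⟩) =
      volume.withDensity (fun x => ∫⁻ s, gaussianPDF m ⟨s ^ 2, sq_nonneg s⟩ x ∂ν) := by
  have hne : ∀ᵐ s ∂ν, s ≠ 0 := measure_eq_zero_iff_ae_notMem.1 hν
  rw [← Measure.bind_withDensity ν volume (measurable_gaussianPDF_sq m)]
  refine Measure.bind_congr_right (hne.mono fun s hs => gaussianReal_of_var_ne_zero m ?_)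
  show (⟨s ^ 2, sq_nonneg s⟩ : ℝ≥0) ≠ 0
  simpa [← NNReal.coe_ne_zero] using hs

lemma bind_gaussianReal_sq_absolutelyContinuous (m : ℝ) (ν : Measure ℝ) [SFinite ν]
    (hν : ν {0} = 0) : ν.bind (fun s => gaussianReal m ⟨s ^ 2, sq_nonneg s⟩) ≪ volume := by
  rw [bind_gaussianReal_sq_eq_withDensity m ν hν]
  exact withDensity_absolutelyContinuous _ _

instance isProbabilityMeasure_bind_gaussianReal_sq (m : ℝ) (ν : Measure ℝ)
    [IsProbabilityMeasure ν] :
    IsProbabilityMeasure (ν.bind fun s => gaussianReal m ⟨s ^ 2, sq_nonneg s⟩) :=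
  isProbabilityMeasure_bind (measurable_gaussianReal_sq m).aemeasurable
    (ae_of_all _ fun _ => instIsProbabilityMeasureGaussianReal _ _)

lemma rnDeriv_bind_gaussianReal_sq (m : ℝ) (ν : Measure ℝ) [IsProbabilityMeasure ν]
    (hν : ν {0} = 0) :
    ∀ᵐ x, (ν.bind fun s => gaussianReal m ⟨s ^ 2, sq_nonneg s⟩).rnDeriv volume x =
      ENNReal.ofReal (∫ s, gaussianPDFReal m ⟨s ^ 2, sq_nonneg s⟩ x ∂ν) := by
  have hmix := bind_gaussianReal_sq_eq_withDensity m ν hν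
  filter_upwards
    [hmix ▸ Measure.rnDeriv_withDensity volume (measurable_lintegral_gaussianPDF_sq m ν),
      Measure.rnDeriv_lt_top (ν.bind fun s => gaussianReal m ⟨s ^ 2, sq_nonneg s⟩) volume]
    with x hx hfin
  rw [hx] at hfin ⊢
  refine (ofReal_integral_eq_lintegral_ofReal_of_lt_top ?_
    (ae_of_all _ fun s => gaussianPDFReal_nonneg _ _ _) hfin).symm
  unfold gaussianPDFReal
  fun_prop

/-- For `He > 0` the cloud model is absolutely continuous w.r.t. Lebesgue measure, with density
`f(x) = ∫ (2π s²)^(-1/2) exp(−(x−Ex)²/(2s²)) ⬝ (2π He²)^(-1/2) exp(−(s−En)²/(2He²)) ds`.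
(In Lean, `(√(2π·0²))⁻¹ = 0`, so the inner Gaussian density at `s = 0` is interpreted as `0`.) -/
theorem cloudModel_absolutelyContinuous (Ex En He : ℝ) (hHe : 0 < He) :
    cloudModel Ex En He ≪ (volume : Measure ℝ) ∧
      ∀ᵐ x ∂(volume : Measure ℝ),
        (cloudModel Ex En He).rnDeriv volume x =
          ENNReal.ofReal (∫ s : ℝ,
            (Real.sqrt (2 * π * s ^ 2))⁻¹ * Real.exp (-(x - Ex) ^ 2 / (2 * s ^ 2)) *
              ((Real.sqrt (2 * π * He ^ 2))⁻¹ * Real.exp (-(s - En) ^ 2 / (2 * He ^ 2)))) := by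
  have hv : (⟨He ^ 2, sq_nonneg He⟩ : ℝ≥0) ≠ 0 := by
    simpa [← NNReal.coe_ne_zero] using hHe.ne'
  -- `⟨He ^ 2, _⟩` has type `{r // 0 ≤ r}` rather than `ℝ≥0`, which defeats instance search.
  have := instIsProbabilityMeasureGaussianReal En ⟨He ^ 2, sq_nonneg He⟩
  have hν : gaussianReal En ⟨He ^ 2, sq_nonneg He⟩ {0} = 0 :=
    gaussianReal_absolutelyContinuous En hv (measure_singleton 0)
  refine ⟨bind_gaussianReal_sq_absolutelyContinuous Ex _ hν, ?_⟩
  filter_upwards [rnDeriv_bind_gaussianReal_sq Ex _ hν] with x hx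
  rw [cloudModel, hx, integral_gaussianReal_eq_integral_smul hv]
  congr 2 with s
  exact mul_comm _ _
end
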